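/- arXiv:1509.05516 — 10 statements merged into one kernel-verified Lean document; each statement's English description precedes it below -/
import Mathlib

section
/- Let A be a unital associative ℂ-algebra and let σ, τ ∈ A satisfy τ·σ·(σ+τ) = (σ+τ)·τ·σ. Let x, y, z ∈ ℂ be such that 1−xσ, 1−yσ, 1−xτ and 1−yτ are units of A. Define Ř^σ(u,v) = (1−vσ)·(1−uσ)⁻¹ and Ř^τ(u,v) = (1−vτ)·(1−uτ)⁻¹. Then the braided Yang–Baxter equation holds: Ř^σ(x,y)·Ř^τ(x,z)·Ř^σ(y,z) = Ř^τ(y,z)·Ř^σ(x,z)·Ř^τ(x,y). -/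
private lemma commute_ringInverse_right {M₀ : Type*} [MonoidWithZero M₀] {a b : M₀}
    (h : Commute a b) (hb : IsUnit b) : Commute a (Ring.inverse b) := by
  show a * Ring.inverse b = Ring.inverse b * a
  conv_lhs => rw [← Ring.inverse_mul_cancel_left b (a * Ring.inverse b) hb]
  rw [← mul_assoc b a, ← h.eq, mul_assoc a b, Ring.mul_inverse_cancel _ hb, mul_one]

/-- **Baxterisation for the braid-like algebra `S_n`.**
If `σ, τ` satisfy the defining relation `τσ(σ+τ) = (σ+τ)τσ` of neighbouring
generators of `S_n`, then the Baxterised matrices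
`Ř^a(u,v) = (1 - v•a)(1 - u•a)⁻¹` satisfy the braided Yang–Baxter equation. -/
theorem baxterisation_Sn_braided_YBE (A : Type*) [Ring A] [Algebra ℂ A]
    (σ τ : A) (hrel : τ * σ * (σ + τ) = (σ + τ) * τ * σ)
    (x y z : ℂ)
    (hxσ : IsUnit (1 - x • σ)) (hyσ : IsUnit (1 - y • σ))
    (hxτ : IsUnit (1 - x • τ)) (hyτ : IsUnit (1 - y • τ)) :
    (fun u v : ℂ => (1 - v • σ) * Ring.inverse (1 - u • σ)) x y *
      (fun u v : ℂ => (1 - v • τ) * Ring.inverse (1 - u • τ)) x z *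
      (fun u v : ℂ => (1 - v • σ) * Ring.inverse (1 - u • σ)) y z =
    (fun u v : ℂ => (1 - v • τ) * Ring.inverse (1 - u • τ)) y z *
      (fun u v : ℂ => (1 - v • σ) * Ring.inverse (1 - u • σ)) x z *
      (fun u v : ℂ => (1 - v • τ) * Ring.inverse (1 - u • τ)) x y := by
  beta_reduce
  have hPQ : Commute (σ + τ) (τ * σ) := by
    show (σ + τ) * (τ * σ) = (τ * σ) * (σ + τ)
    rw [← mul_assoc, ← hrel, mul_assoc]
  set S : A := 1 - x • σ with hS
  set T : A := 1 - x • τ with hT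
  set Si := Ring.inverse S with hSi
  set Ti := Ring.inverse T with hTi
  set c : A := τ * σ - σ * τ with hc
  -- key form of the braid relation
  have key : c * σ = τ * c := by
    rw [hc, sub_mul, mul_sub, sub_eq_sub_iff_add_eq_add]
    have h1 := hrel
    rw [mul_add] at h1
    rw [add_mul, add_mul] at h1
    rw [← mul_assoc τ σ τ, ← mul_assoc τ τ σ, h1]
    exact add_comm _ _
  -- cancellation helpers
  have hSSi : S * Si = 1 := Ring.mul_inverse_cancel S hxσ
  have hTTi : T * Ti = 1 := Ring.mul_inverse_cancel T hxτ
  have hTiT : Ti * T = 1 := Ring.inverse_mul_cancel T hxτ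
  have hSSi' : ∀ b : A, S * (Si * b) = b := fun b => by rw [← mul_assoc, hSSi, one_mul]
  have hTiT' : ∀ b : A, Ti * (T * b) = b := fun b => by rw [← mul_assoc, hTiT, one_mul]
  -- elementary expansions
  have e1 : σ * T = T * σ + x • c := by
    rw [hT, hc]
    simp only [mul_sub, sub_mul, one_mul, mul_one, smul_sub, smul_add, smul_smul,
      mul_smul_comm, smul_mul_assoc]
    module
  have e1' : T * σ = σ * T - x • c := by rw [e1]; abel
  have e2 : S * τ = τ * S + x • c := by
    rw [hS, hc]
    simp only [mul_sub, sub_mul, one_mul, mul_one, smul_sub, smul_add, smul_smul,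
      mul_smul_comm, smul_mul_assoc]
    module
  have e3 : S * (τ * σ) = (τ * σ) * S + x • (c * σ) := by
    rw [hS, hc]
    simp only [mul_sub, sub_mul, one_mul, mul_one, smul_sub, smul_add, smul_smul,
      mul_smul_comm, smul_mul_assoc, mul_assoc]
    module
  -- `c` intertwines the two inverses
  have hcS : c * S = T * c := by
    rw [hS, hT]
    simp only [mul_sub, sub_mul, mul_one, one_mul, mul_smul_comm, smul_mul_assoc, key]
  have hTic : Ti * c = c * Si := by
    have h2 : Ti * (c * S) * Si = Ti * (T * c) * Si := by rw [hcS]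
    rwa [← mul_assoc Ti c S, Ring.mul_inverse_cancel_right _ _ hxσ,
      ← mul_assoc Ti T c, hTiT, one_mul] at h2
  -- commutations with inverses
  have hσS : σ * S = S * σ := by
    rw [hS]; simp only [mul_sub, sub_mul, mul_one, one_mul, mul_smul_comm, smul_mul_assoc]
  have hσSi : σ * Si = Si * σ := by
    refine hxσ.mul_left_cancel ?_
    rw [← mul_assoc S σ Si, ← hσS, mul_assoc σ S Si, hSSi, mul_one,
      ← mul_assoc S Si σ, hSSi, one_mul]
  have hτT : τ * T = T * τ := by
    rw [hT]; simp only [mul_sub, sub_mul, mul_one, one_mul, mul_smul_comm, smul_mul_assoc]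
  have hτTi : τ * Ti = Ti * τ := by
    refine hxτ.mul_left_cancel ?_
    rw [← mul_assoc T τ Ti, ← hτT, mul_assoc τ T Ti, hTTi, mul_one,
      ← mul_assoc T Ti τ, hTTi, one_mul]
  -- the two key lemmas
  have lem1 : Si * (τ * Ti) + Si * (Ti * σ) = (σ + τ) * (Si * Ti) := by
    refine hxσ.mul_left_cancel (hxτ.mul_right_cancel ?_)
    have hL : S * (Si * (τ * Ti) + Si * (Ti * σ)) * T = σ + τ + x • (c * Si) := by
      rw [mul_add, add_mul, hSSi' (τ * Ti), hSSi' (Ti * σ), mul_assoc τ Ti T, hTiT, mul_one,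
        mul_assoc Ti σ T, e1, mul_add, hTiT' σ, mul_smul_comm, hTic]
      abel
    have hR : S * ((σ + τ) * (Si * Ti)) * T = σ + τ + x • (c * Si) := by
      rw [← mul_assoc S (σ + τ) (Si * Ti), mul_assoc (S * (σ + τ)) (Si * Ti) T,
        mul_assoc Si Ti T, hTiT, mul_one, mul_add S σ τ, ← hσS, add_mul,
        mul_assoc σ S Si, hSSi, mul_one, e2, add_mul, mul_assoc τ S Si, hSSi, mul_one,
        smul_mul_assoc]
      abel
    rw [hL, hR]
  have hTiσ : Ti * σ = σ * Ti + x • (Ti * (c * Ti)) := by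
    refine hxτ.mul_left_cancel ?_
    rw [← mul_assoc T Ti σ, hTTi, one_mul, mul_add, ← mul_assoc T σ Ti, e1', sub_mul,
      mul_assoc σ T Ti, hTTi, mul_one, smul_mul_assoc, mul_smul_comm,
      ← mul_assoc T Ti (c * Ti), hTTi, one_mul]
    abel
  have lem2 : Si * (τ * (Ti * σ)) = (τ * σ) * (Si * Ti) := by
    refine hxσ.mul_left_cancel ?_
    rw [hSSi' (τ * (Ti * σ)), hTiσ, mul_add, mul_smul_comm,
      ← mul_assoc τ Ti (c * Ti), hτTi, mul_assoc Ti τ (c * Ti), ← mul_assoc τ c Ti,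
      ← key, mul_assoc c σ Ti, ← mul_assoc Ti c (σ * Ti), hTic,
      mul_assoc c Si (σ * Ti), ← mul_assoc Si σ Ti, ← hσSi, mul_assoc σ Si Ti,
      ← mul_assoc τ σ Ti,
      ← mul_assoc S (τ * σ) (Si * Ti), e3, add_mul, mul_assoc (τ * σ) S (Si * Ti),
      hSSi' Ti, smul_mul_assoc, mul_assoc c σ (Si * Ti)]
  -- quadratic polynomial form
  have lemP : ∀ a : ℂ, (1 - a•τ) * (1 - a•σ) = 1 - a•(σ+τ) + (a*a)•(τ*σ) := by
    intro a
    simp only [mul_sub, sub_mul, one_mul, mul_one, smul_sub, smul_add, smul_smul,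
      mul_smul_comm, smul_mul_assoc]
    module
  have lemM : ∀ b : ℂ, Si * ((1 - b•τ) * (Ti * (1 - b•σ)))
      = (1 - b•(σ+τ) + (b*b)•(τ*σ)) * (Si * Ti) := by
    intro b
    have expand : Si * ((1 - b•τ) * (Ti * (1 - b•σ)))
        = Si * Ti - b • (Si * (τ * Ti) + Si * (Ti * σ)) + (b*b) • (Si * (τ * (Ti * σ))) := by
      simp only [mul_sub, sub_mul, one_mul, mul_one, smul_sub, smul_add, smul_smul,
        mul_smul_comm, smul_mul_assoc, mul_add, add_mul, mul_assoc]
      module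
    rw [expand, lem1, lem2]
    simp only [sub_mul, add_mul, one_mul, smul_mul_assoc]
  have hPab : ∀ a b : ℂ, Commute (1 - a•(σ+τ) + (a*a)•(τ*σ)) (1 - b•(σ+τ) + (b*b)•(τ*σ)) := by
    intro a b
    have h1 : Commute (σ+τ) (1 - b•(σ+τ) + (b*b)•(τ*σ)) :=
      ((Commute.one_right _).sub_right ((Commute.refl _).smul_right b)).add_right
        (hPQ.smul_right _)
    have h2 : Commute (τ*σ) (1 - b•(σ+τ) + (b*b)•(τ*σ)) :=
      ((Commute.one_right _).sub_right (hPQ.symm.smul_right b)).add_right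
        ((Commute.refl _).smul_right _)
    exact ((Commute.one_left _).sub_left (h1.smul_left a)).add_left (h2.smul_left _)
  -- symmetry of the core product F a b
  have hF : ∀ a b : ℂ,
      (1 - a•τ) * ((1 - a•σ) * (Si * ((1 - b•τ) * (Ti * (1 - b•σ)))))
        = (1 - b•τ) * ((1 - b•σ) * (Si * ((1 - a•τ) * (Ti * (1 - a•σ))))) := by
    intro a b
    rw [lemM b, lemM a,
      ← mul_assoc (1 - a•τ) (1 - a•σ) _, lemP a,
      ← mul_assoc (1 - b•τ) (1 - b•σ) _, lemP b,
      ← mul_assoc _ _ (Si * Ti), ← mul_assoc _ _ (Si * Ti), (hPab a b).eq]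
  -- assembly
  have hS₂S₂i : (1 - y•σ) * Ring.inverse (1 - y•σ) = 1 := Ring.mul_inverse_cancel _ hyσ
  have hT₂iT₂' : ∀ b : A, Ring.inverse (1 - y•τ) * ((1 - y•τ) * b) = b := fun b => by
    rw [← mul_assoc, Ring.inverse_mul_cancel _ hyτ, one_mul]
  have hcomm23 : Ring.inverse (1 - y•τ) * (1 - z•τ) = (1 - z•τ) * Ring.inverse (1 - y•τ) := by
    have h3 : Commute ((1 : A) - z•τ) (1 - y•τ) :=
      (Commute.one_right _).sub_right
        ((Commute.one_left _).sub_left (((Commute.refl τ).smul_left z).smul_right y))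
    exact (commute_ringInverse_right h3 hyτ).symm.eq
  have hcomm23' : ∀ b : A, Ring.inverse (1 - y•τ) * ((1 - z•τ) * b)
      = (1 - z•τ) * (Ring.inverse (1 - y•τ) * b) := fun b => by
    rw [← mul_assoc, hcomm23, mul_assoc]
  calc (1 - y•σ) * Si * ((1 - z•τ) * Ti) * ((1 - z•σ) * Ring.inverse (1 - y•σ))
      = Ring.inverse (1 - y•τ) * (((1 - y•τ) * ((1 - y•σ) * (Si * ((1 - z•τ)
          * (Ti * (1 - z•σ)))))) * Ring.inverse (1 - y•σ)) := by
        simp only [mul_assoc]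
        rw [hT₂iT₂']
    _ = Ring.inverse (1 - y•τ) * (((1 - z•τ) * ((1 - z•σ) * (Si * ((1 - y•τ)
          * (Ti * (1 - y•σ)))))) * Ring.inverse (1 - y•σ)) := by rw [hF y z]
    _ = (1 - z•τ) * Ring.inverse (1 - y•τ) * ((1 - z•σ) * Si) * ((1 - y•τ) * Ti) := by
        simp only [mul_assoc]
        rw [hS₂S₂i, mul_one, hcomm23']
end

section
/- Let A be a unital associative ℂ-algebra and σ, τ ∈ A. For x ∈ ℂ set A(x) = 1 − x(σ+τ) + x²·τσ. Then A(x)·A(y) = A(y)·A(x) for all x, y ∈ ℂ if and only if τ·σ·(σ+τ) = (σ+τ)·τ·σ. -/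
lemma expand_A_comm (A : Type*) [Ring A] [Algebra ℂ A] (σ τ : A) (x y : ℂ) :
    (1 - x • (σ + τ) + (x ^ 2) • (τ * σ)) * (1 - y • (σ + τ) + (y ^ 2) • (τ * σ)) -
    (1 - y • (σ + τ) + (y ^ 2) • (τ * σ)) * (1 - x • (σ + τ) + (x ^ 2) • (τ * σ)) =
    (x * y ^ 2 - x ^ 2 * y) • (τ * σ * (σ + τ) - (σ + τ) * (τ * σ)) := by
  simp only [mul_add, add_mul, sub_mul, mul_sub, smul_mul_assoc, mul_smul_comm,
    smul_smul, one_mul, mul_one, smul_sub, sub_smul, smul_add]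
  module

/-- The products `A(x) = 1 - x(σ+τ) + x²·τσ` commute for all spectral
parameters `x, y` if and only if `τσ(σ+τ) = (σ+τ)τσ`, the defining relation
of the braid-like algebra `S_n`. -/
theorem commuting_A_iff_braid_like_relation (A : Type*) [Ring A] [Algebra ℂ A]
    (σ τ : A) :
    (∀ x y : ℂ,
        (1 - x • (σ + τ) + (x ^ 2) • (τ * σ)) * (1 - y • (σ + τ) + (y ^ 2) • (τ * σ)) =
        (1 - y • (σ + τ) + (y ^ 2) • (τ * σ)) * (1 - x • (σ + τ) + (x ^ 2) • (τ * σ))) ↔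
      τ * σ * (σ + τ) = (σ + τ) * τ * σ := by
  constructor
  · intro h
    have h12 := h 1 2
    have := expand_A_comm A σ τ 1 2
    rw [h12, sub_self] at this
    have hc : ((1:ℂ) * 2 ^ 2 - 1 ^ 2 * 2) ≠ 0 := by norm_num
    have := (smul_eq_zero.mp this.symm).resolve_left hc
    have := sub_eq_zero.mp this
    rw [this, mul_assoc]
  · intro h x y
    have := expand_A_comm A σ τ x y
    have h' : τ * σ * (σ + τ) - (σ + τ) * (τ * σ) = 0 := by
      rw [h, ← mul_assoc, sub_self]
    rw [h', smul_zero] at this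
    exact sub_eq_zero.mp this
end

section
/- Let A be a unital associative ℂ-algebra and let σ, τ ∈ A satisfy τ·σ·(σ+τ) = (σ+τ)·τ·σ. Let α, β, γ ∈ ℂ be such that 1+γσ and 1+γτ are units of A. Set σ' = (α + βσ)·(1+γσ)⁻¹ and τ' = (α + βτ)·(1+γτ)⁻¹. Then τ'·σ'·(σ'+τ') = (σ'+τ')·τ'·σ'. -/
private theorem moebius_aux (A : Type*) [Ring A] [Algebra ℂ A] (c d : ℂ) (x y : A)
    (h : y * x * (x + y) = (x + y) * y * x) :
    (c • (1:A) + d • y) * (c • (1:A) + d • x) * ((c • (1:A) + d • x) + (c • (1:A) + d • y))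
      = ((c • (1:A) + d • x) + (c • (1:A) + d • y)) * (c • (1:A) + d • y) * (c • (1:A) + d • x) := by
  have key : (c • (1:A) + d • y) * (c • (1:A) + d • x) * ((c • (1:A) + d • x) + (c • (1:A) + d • y))
      - ((c • (1:A) + d • x) + (c • (1:A) + d • y)) * (c • (1:A) + d • y) * (c • (1:A) + d • x)
      = (d^3) • (y * x * (x + y) - (x + y) * y * x) := by
    noncomm_ring
    module
  rw [h, sub_self, smul_zero, sub_eq_zero] at key
  exact key

private theorem moebius_inv_rel (A : Type*) [Ring A] (u v s t : A)
    (hus : u * s = 1) (hsu : s * u = 1) (hvt : v * t = 1) (htv : t * v = 1)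
    (K : v * u * (u + v) = (u + v) * v * u) :
    t * s * (s + t) = (s + t) * t * s := by
  have K' : v * u * (u + v) = (u + v) * (v * u) := by
    rw [K, mul_assoc]
  have hstvu : s * t * (v * u) = 1 := by
    calc s * t * (v * u) = s * (t * v * u) := by simp only [mul_assoc]
      _ = 1 := by rw [htv, one_mul, hsu]
  have hvust : v * u * (s * t) = 1 := by
    calc v * u * (s * t) = v * (u * s * t) := by simp only [mul_assoc]
      _ = 1 := by rw [hus, one_mul, hvt]
  have C1 : s * t * (u + v) = (u + v) * (s * t) := by
    calc s * t * (u + v) = s * t * (u + v) * (v * u * (s * t)) := by rw [hvust, mul_one]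
      _ = s * t * ((u + v) * (v * u)) * (s * t) := by simp only [mul_assoc]
      _ = s * t * (v * u * (u + v)) * (s * t) := by rw [K']
      _ = s * t * (v * u) * ((u + v) * (s * t)) := by simp only [mul_assoc]
      _ = (u + v) * (s * t) := by rw [hstvu, one_mul]
  have h2 : t * (u + v) * s = s + t := by
    rw [mul_add, add_mul, mul_assoc t u s, hus, mul_one, htv, one_mul, add_comm]
  calc t * s * (s + t) = t * s * (t * (u + v) * s) := by rw [h2]
    _ = t * (s * t * (u + v)) * s := by simp only [mul_assoc]
    _ = t * ((u + v) * (s * t)) * s := by rw [C1]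
    _ = (t * (u + v) * s) * (t * s) := by simp only [mul_assoc]
    _ = (s + t) * t * s := by rw [h2, mul_assoc]

/-- The Möbius transformation `σ ↦ (α + βσ)(1 + γσ)⁻¹` preserves the defining
relation `τσ(σ+τ) = (σ+τ)τσ` of the braid-like algebra `S_n`. -/
theorem moebius_preserves_braid_like_relation (A : Type*) [Ring A] [Algebra ℂ A]
    (σ τ : A) (hrel : τ * σ * (σ + τ) = (σ + τ) * τ * σ)
    (α β γ : ℂ) (hσ : IsUnit (1 + γ • σ)) (hτ : IsUnit (1 + γ • τ)) :
    let σ' := (α • (1 : A) + β • σ) * Ring.inverse (1 + γ • σ)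
    let τ' := (α • (1 : A) + β • τ) * Ring.inverse (1 + γ • τ)
    τ' * σ' * (σ' + τ') = (σ' + τ') * τ' * σ' := by
  intro σ' τ'
  rcases eq_or_ne γ 0 with hγ | hγ
  · have hσ' : σ' = α • (1:A) + β • σ := by
      show (α • (1:A) + β • σ) * Ring.inverse (1 + γ • σ) = _
      rw [hγ]; simp
    have hτ' : τ' = α • (1:A) + β • τ := by
      show (α • (1:A) + β • τ) * Ring.inverse (1 + γ • τ) = _
      rw [hγ]; simp
    rw [hσ', hτ']
    exact moebius_aux A α β σ τ hrel
  · have hus : (1 + γ • σ) * Ring.inverse (1 + γ • σ) = 1 := Ring.mul_inverse_cancel _ hσ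
    have hsu : Ring.inverse (1 + γ • σ) * (1 + γ • σ) = 1 := Ring.inverse_mul_cancel _ hσ
    have hvt : (1 + γ • τ) * Ring.inverse (1 + γ • τ) = 1 := Ring.mul_inverse_cancel _ hτ
    have htv : Ring.inverse (1 + γ • τ) * (1 + γ • τ) = 1 := Ring.inverse_mul_cancel _ hτ
    have K : (1 + γ • τ) * (1 + γ • σ) * ((1 + γ • σ) + (1 + γ • τ))
        = ((1 + γ • σ) + (1 + γ • τ)) * (1 + γ • τ) * (1 + γ • σ) := by
      have := moebius_aux A 1 γ σ τ hrel
      simpa only [one_smul] using this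
    have Key : Ring.inverse (1 + γ • τ) * Ring.inverse (1 + γ • σ)
          * (Ring.inverse (1 + γ • σ) + Ring.inverse (1 + γ • τ))
        = (Ring.inverse (1 + γ • σ) + Ring.inverse (1 + γ • τ))
          * Ring.inverse (1 + γ • τ) * Ring.inverse (1 + γ • σ) :=
      moebius_inv_rel A _ _ _ _ hus hsu hvt htv K
    have hσ' : σ' = (β/γ) • (1:A) + (α - β/γ) • Ring.inverse (1 + γ • σ) := by
      show (α • (1:A) + β • σ) * Ring.inverse (1 + γ • σ) = _
      have h1 : α • (1:A) + β • σ = (β/γ) • (1 + γ • σ) + (α - β/γ) • (1:A) := by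
        rw [smul_add, smul_smul, div_mul_cancel₀ β hγ]
        module
      rw [h1, add_mul, smul_mul_assoc, smul_mul_assoc, one_mul, hus]
    have hτ' : τ' = (β/γ) • (1:A) + (α - β/γ) • Ring.inverse (1 + γ • τ) := by
      show (α • (1:A) + β • τ) * Ring.inverse (1 + γ • τ) = _
      have h1 : α • (1:A) + β • τ = (β/γ) • (1 + γ • τ) + (α - β/γ) • (1:A) := by
        rw [smul_add, smul_smul, div_mul_cancel₀ β hγ]
        module
      rw [h1, add_mul, smul_mul_assoc, smul_mul_assoc, one_mul, hvt]
    rw [hσ', hτ']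
    exact moebius_aux A (β/γ) (α - β/γ) _ _ Key
end

section
/- Let A be a unital associative ℂ-algebra and let σ, τ ∈ A be units satisfying τ·σ·(σ+τ) = (σ+τ)·τ·σ. Then the inverses satisfy the same relation: τ⁻¹·σ⁻¹·(σ⁻¹+τ⁻¹) = (σ⁻¹+τ⁻¹)·τ⁻¹·σ⁻¹. -/
/-- If invertible elements `σ, τ` satisfy the defining relation
`τσ(σ+τ) = (σ+τ)τσ` of the braid-like algebra `S_n`, then so do their
inverses. -/
theorem inverses_satisfy_braid_like_relation (A : Type*) [Ring A] [Algebra ℂ A]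
    (σ τ : A) (hσ : IsUnit σ) (hτ : IsUnit τ)
    (hrel : τ * σ * (σ + τ) = (σ + τ) * τ * σ) :
    Ring.inverse τ * Ring.inverse σ * (Ring.inverse σ + Ring.inverse τ) =
      (Ring.inverse σ + Ring.inverse τ) * Ring.inverse τ * Ring.inverse σ := by
  obtain ⟨u, rfl⟩ := hσ
  obtain ⟨v, rfl⟩ := hτ
  rw [Ring.inverse_unit, Ring.inverse_unit]
  set a : A := ((u⁻¹ : Aˣ) : A) with ha
  set b : A := ((v⁻¹ : Aˣ) : A) with hb
  have hua' : ∀ x : A, (u : A) * (a * x) = x := fun x => by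
    rw [← mul_assoc, u.mul_inv, one_mul]
  have hau' : ∀ x : A, a * ((u : A) * x) = x := fun x => by
    rw [← mul_assoc, u.inv_mul, one_mul]
  have hvb' : ∀ x : A, (v : A) * (b * x) = x := fun x => by
    rw [← mul_assoc, v.mul_inv, one_mul]
  have hbv' : ∀ x : A, b * ((v : A) * x) = x := fun x => by
    rw [← mul_assoc, v.inv_mul, one_mul]
  have hua : (u : A) * a = 1 := u.mul_inv
  have hau : a * (u : A) = 1 := u.inv_mul
  have hvb : (v : A) * b = 1 := v.mul_inv
  have hbv : b * (v : A) = 1 := v.inv_mul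
  -- a*b commutes with u+v
  have key : a * b * ((u : A) + v) = ((u : A) + v) * (a * b) := by
    have e : a * b * ((u : A) + v)
        = a * b * ((((u : A) + v) * ((v : A) * u)) * (a * b)) := by
      simp [mul_add, add_mul, mul_assoc, hua', hau', hvb', hbv', hua, hau, hvb, hbv]
    have e2 : (((u : A) + v) * ((v : A) * u)) = (v : A) * u * ((u : A) + v) := by
      rw [← mul_assoc, ← hrel]
    rw [e, e2]
    simp [mul_add, add_mul, mul_assoc, hua', hau', hvb', hbv', hua, hau, hvb, hbv]
  -- a + b = b*(u+v)*a
  have hsum : a + b = b * ((u : A) + v) * a := by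
    rw [mul_add, add_mul, mul_assoc, mul_assoc, hua, mul_one,
      ← mul_assoc b (v : A) a, hbv, one_mul]
    exact add_comm a b
  calc b * a * (a + b)
      = b * (a * b * ((u : A) + v)) * a := by rw [hsum]; noncomm_ring
    _ = b * (((u : A) + v) * (a * b)) * a := by rw [key]
    _ = (b * ((u : A) + v) * a) * (b * a) := by noncomm_ring
    _ = (a + b) * b * a := by rw [← hsum]; noncomm_ring
end

section
/- Let A be a unital associative ℂ-algebra and let g, h ∈ A satisfy g·h·g = h·g·h, g² = g, and h² = h. Then h·g·(g+h) = (g+h)·h·g. -/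
/-- Hecke algebra `H_n(0)` relations imply the defining relation of the
braid-like algebra `S_n`: if `ghg = hgh`, `g² = g` and `h² = h`, then
`hg(g+h) = (g+h)hg`. -/
theorem hecke_implies_braid_like_relation (A : Type*) [Ring A] [Algebra ℂ A]
    (g h : A) (hbraid : g * h * g = h * g * h)
    (hg : g ^ 2 = g) (hh : h ^ 2 = h) :
    h * g * (g + h) = (g + h) * h * g := by
  have hg' : g * g = g := by rw [← pow_two, hg]
  have hh' : h * h = h := by rw [← pow_two, hh]
  calc h * g * (g + h) = h * (g * g) + h * g * h := by noncomm_ring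
    _ = h * g + g * h * g := by rw [hg', hbraid]
    _ = g * (h * g) + (h * h) * g := by rw [hh']; noncomm_ring
    _ = (g + h) * h * g := by noncomm_ring
end

section
/- For an integer m ≥ 1, let S be a complex matrix indexed by (Fin m × Fin m) (an operator on ℂ^m ⊗ ℂ^m), and for such a matrix set S₁₂ = S ⊗ₖ 1ₘ and S₂₃ = 1ₘ ⊗ₖ S (Kronecker product with the m×m identity, reindexed so that both act on ℂ^m ⊗ ℂ^m ⊗ ℂ^m). Say S satisfies condition (E) if S₂₃·S₁₂·(S₁₂+S₂₃) = (S₁₂+S₂₃)·S₂₃·S₁₂. If S satisfies (E), then: (a) if S is invertible, S⁻¹ satisfies (E); (b) (P·S·P)ᵀ satisfies (E), where P is the permutation (swap) matrix P((i,j),(k,l)) = δ_{il}δ_{jk} and ᵀ is matrix transpose; (c) for any invertible m×m matrix Q, the matrix (Q ⊗ₖ Q)·S·(Q ⊗ₖ Q)⁻¹ satisfies (E). -/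
/-!
With `a = S₁₂` and `b = S₂₃`, condition (E) is the relation `b a (a + b) = (a + b) b a`. It is
preserved by ring homomorphisms and by conjugation, it passes from units `a, b` to `a⁻¹, b⁻¹`
(multiply by `b⁻¹ a⁻¹ b⁻¹` on the left and by `a⁻¹ b⁻¹ a⁻¹` on the right), and transposition
turns it into the relation for `(bᵀ, aᵀ)`. Inverting `S` inverts `S₁₂` and `S₂₃`, conjugating
`S` by `Q ⊗ Q` conjugates both by `Q ⊗ Q ⊗ Q`, and `((PSP)ᵀ)₁₂`, `((PSP)ᵀ)₂₃` are `(S₂₃)ᵀ`,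
`(S₁₂)ᵀ` read with the three tensor factors in reverse order.
-/

open Matrix Kronecker

/-- `S ⊗ₖ 1ₘ`, reindexed to act on `ℂ^m ⊗ ℂ^m ⊗ ℂ^m`. -/
noncomputable def kron12 {m : ℕ} (S : Matrix (Fin m × Fin m) (Fin m × Fin m) ℂ) :
    Matrix (Fin m × Fin m × Fin m) (Fin m × Fin m × Fin m) ℂ :=
  Matrix.reindex (Equiv.prodAssoc (Fin m) (Fin m) (Fin m))
    (Equiv.prodAssoc (Fin m) (Fin m) (Fin m)) (S ⊗ₖ (1 : Matrix (Fin m) (Fin m) ℂ))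

/-- `1ₘ ⊗ₖ S`, acting on `ℂ^m ⊗ ℂ^m ⊗ ℂ^m`. -/
noncomputable def kron23 {m : ℕ} (S : Matrix (Fin m × Fin m) (Fin m × Fin m) ℂ) :
    Matrix (Fin m × Fin m × Fin m) (Fin m × Fin m × Fin m) ℂ :=
  (1 : Matrix (Fin m) (Fin m) ℂ) ⊗ₖ S

/-- Condition (E): the single relation of `S_3` characterising tensor-product
representations of the braid-like algebra `S_n`. -/
def condE {m : ℕ} (S : Matrix (Fin m × Fin m) (Fin m × Fin m) ℂ) : Prop :=
  kron23 S * kron12 S * (kron12 S + kron23 S) =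
    (kron12 S + kron23 S) * kron23 S * kron12 S

/-- The swap matrix `P((i,j),(k,l)) = δ_{il} δ_{jk}` on `ℂ^m ⊗ ℂ^m`. -/
def swapMatrix (m : ℕ) : Matrix (Fin m × Fin m) (Fin m × Fin m) ℂ :=
  Matrix.of fun p q => if p.1 = q.2 ∧ p.2 = q.1 then 1 else 0

/-- Condition (E) for a pair `(a, b)` standing for `(S₁₂, S₂₃)`. -/
def RelE {R : Type*} [Mul R] [Add R] (a b : R) : Prop :=
  b * a * (a + b) = (a + b) * b * a

namespace RelE

variable {R : Type*}

theorem map [Semiring R] {S F : Type*} [Semiring S] [FunLike F R S] [RingHomClass F R S]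
    (f : F) {a b : R} (h : RelE a b) : RelE (f a) (f b) := by
  simpa only [RelE, map_mul, map_add] using congrArg f h

theorem conj [Semiring R] {a b u v : R} (hvu : v * u = 1) (h : RelE a b) :
    RelE (u * a * v) (u * b * v) := by
  have hmul : ∀ x y : R, u * x * v * (u * y * v) = u * (x * y) * v := fun x y => by
    simp only [mul_assoc, ← mul_assoc v u, hvu, one_mul]
  have hadd : u * a * v + u * b * v = u * (a + b) * v := by
    rw [mul_add, add_mul]
  rw [RelE, hadd, hmul, hmul, hmul, hmul, h]

theorem units_inv [Semiring R] {a b : Rˣ} (h : RelE (a : R) b) :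
    RelE (↑a⁻¹ : R) ↑b⁻¹ := by
  have h' := congrArg (fun x : R => ↑(b⁻¹ * a⁻¹ * b⁻¹) * x * ↑(a⁻¹ * b⁻¹ * a⁻¹)) h
  simp only [RelE, Units.val_mul, mul_add, add_mul, mul_assoc, Units.inv_mul_cancel_left,
    Units.mul_inv_cancel_left, Units.inv_mul, Units.mul_inv, one_mul, mul_one] at h' ⊢
  rw [add_comm, ← h', add_comm]

theorem nonsing_inv {n α : Type*} [Fintype n] [DecidableEq n] [CommRing α]
    {A B : Matrix n n α} (hA : IsUnit A) (hB : IsUnit B) (h : RelE A B) : RelE A⁻¹ B⁻¹ := by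
  obtain ⟨u, rfl⟩ := hA
  obtain ⟨v, rfl⟩ := hB
  simpa only [Matrix.coe_units_inv] using h.units_inv

theorem transpose {n α : Type*} [CommSemiring α] [Fintype n] {A B : Matrix n n α}
    (h : RelE A B) : RelE Bᵀ Aᵀ := by
  have h' := congrArg Matrix.transpose h
  simp only [Matrix.transpose_mul, Matrix.transpose_add] at h'
  rw [RelE, add_comm Bᵀ]
  simpa only [mul_assoc] using h'.symm

end RelE

section Kronecker

variable {m : ℕ}

theorem condE_iff_relE (S : Matrix (Fin m × Fin m) (Fin m × Fin m) ℂ) :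
    condE S ↔ RelE (kron12 S) (kron23 S) :=
  Iff.rfl

theorem kron12_mul (A B : Matrix (Fin m × Fin m) (Fin m × Fin m) ℂ) :
    kron12 (A * B) = kron12 A * kron12 B := by
  rw [kron12, ← mul_one (1 : Matrix (Fin m) (Fin m) ℂ), mul_kronecker_mul,
    ← coe_reindexAlgEquiv ℂ ℂ, map_mul]
  rfl

theorem kron12_one : kron12 (1 : Matrix (Fin m × Fin m) (Fin m × Fin m) ℂ) = 1 := by
  rw [kron12, one_kronecker_one, reindex_apply, submatrix_one_equiv]

theorem kron23_mul (A B : Matrix (Fin m × Fin m) (Fin m × Fin m) ℂ) :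
    kron23 (A * B) = kron23 A * kron23 B := by
  rw [kron23, kron23, kron23, ← mul_kronecker_mul, mul_one]

theorem kron23_one : kron23 (1 : Matrix (Fin m × Fin m) (Fin m × Fin m) ℂ) = 1 :=
  one_kronecker_one

theorem condE_nonsing_inv {S : Matrix (Fin m × Fin m) (Fin m × Fin m) ℂ} (hU : IsUnit S)
    (hS : condE S) : condE S⁻¹ := by
  have hSS : S * S⁻¹ = 1 := mul_nonsing_inv S ((isUnit_iff_isUnit_det S).mp hU)
  have h12 : kron12 S * kron12 S⁻¹ = 1 := by rw [← kron12_mul, hSS, kron12_one]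
  have h23 : kron23 S * kron23 S⁻¹ = 1 := by rw [← kron23_mul, hSS, kron23_one]
  rw [condE_iff_relE, ← inv_eq_right_inv h12, ← inv_eq_right_inv h23]
  exact RelE.nonsing_inv (.of_mul_eq_one _ h12) (.of_mul_eq_one _ h23) hS

theorem swapMatrix_eq_toMatrix_prodComm :
    swapMatrix m = (Equiv.prodComm (Fin m) (Fin m)).toPEquiv.toMatrix := by
  ext p q
  simp [swapMatrix, PEquiv.toMatrix_apply, Prod.ext_iff, and_comm]

theorem swapMatrix_mul_mul_swapMatrix (S : Matrix (Fin m × Fin m) (Fin m × Fin m) ℂ) :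
    swapMatrix m * S * swapMatrix m = S.submatrix Prod.swap Prod.swap := by
  rw [swapMatrix_eq_toMatrix_prodComm, PEquiv.toMatrix_toPEquiv_mul,
    PEquiv.mul_toMatrix_toPEquiv, submatrix_submatrix]
  rfl

def reverseFactors (m : ℕ) : Fin m × Fin m × Fin m ≃ Fin m × Fin m × Fin m where
  toFun p := (p.2.2, p.2.1, p.1)
  invFun p := (p.2.2, p.2.1, p.1)
  left_inv _ := rfl
  right_inv _ := rfl

theorem kron12_swap_transpose (S : Matrix (Fin m × Fin m) (Fin m × Fin m) ℂ) :
    kron12 (swapMatrix m * S * swapMatrix m)ᵀ =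
      reindex (reverseFactors m) (reverseFactors m) (kron23 S)ᵀ := by
  ext ⟨i, j, k⟩ ⟨p, q, r⟩
  simp [swapMatrix_mul_mul_swapMatrix, kron12, kron23, reverseFactors, one_apply, eq_comm]

theorem kron23_swap_transpose (S : Matrix (Fin m × Fin m) (Fin m × Fin m) ℂ) :
    kron23 (swapMatrix m * S * swapMatrix m)ᵀ =
      reindex (reverseFactors m) (reverseFactors m) (kron12 S)ᵀ := by
  ext ⟨i, j, k⟩ ⟨p, q, r⟩
  simp [swapMatrix_mul_mul_swapMatrix, kron12, kron23, reverseFactors, one_apply, eq_comm]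

theorem condE_swap_transpose {S : Matrix (Fin m × Fin m) (Fin m × Fin m) ℂ} (hS : condE S) :
    condE (swapMatrix m * S * swapMatrix m)ᵀ := by
  rw [condE_iff_relE, kron12_swap_transpose, kron23_swap_transpose]
  exact (RelE.transpose hS).map (reindexAlgEquiv ℂ ℂ (reverseFactors m))

theorem kron12_kronecker_conj {Q Q' : Matrix (Fin m) (Fin m) ℂ} (hQ : Q * Q' = 1)
    (S : Matrix (Fin m × Fin m) (Fin m × Fin m) ℂ) :
    kron12 ((Q ⊗ₖ Q) * S * (Q' ⊗ₖ Q')) = (Q ⊗ₖ (Q ⊗ₖ Q)) * kron12 S * (Q' ⊗ₖ (Q' ⊗ₖ Q')) := by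
  have hone : (1 : Matrix (Fin m) (Fin m) ℂ) = Q * 1 * Q' := by rw [mul_one, hQ]
  rw [kron12, hone, mul_kronecker_mul, mul_kronecker_mul, ← coe_reindexAlgEquiv ℂ ℂ,
    map_mul, map_mul, coe_reindexAlgEquiv, kronecker_assoc, kronecker_assoc]
  rfl

theorem kron23_kronecker_conj {Q Q' : Matrix (Fin m) (Fin m) ℂ} (hQ : Q * Q' = 1)
    (S : Matrix (Fin m × Fin m) (Fin m × Fin m) ℂ) :
    kron23 ((Q ⊗ₖ Q) * S * (Q' ⊗ₖ Q')) = (Q ⊗ₖ (Q ⊗ₖ Q)) * kron23 S * (Q' ⊗ₖ (Q' ⊗ₖ Q')) := by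
  rw [kron23, kron23, ← mul_kronecker_mul, ← mul_kronecker_mul, mul_one, hQ]

theorem condE_kronecker_conj {Q Q' : Matrix (Fin m) (Fin m) ℂ} (hQQ' : Q * Q' = 1)
    (hQ'Q : Q' * Q = 1) {S : Matrix (Fin m × Fin m) (Fin m × Fin m) ℂ} (hS : condE S) :
    condE ((Q ⊗ₖ Q) * S * (Q' ⊗ₖ Q')) := by
  rw [condE_iff_relE, kron12_kronecker_conj hQQ', kron23_kronecker_conj hQQ']
  refine RelE.conj ?_ hS
  rw [← mul_kronecker_mul, ← mul_kronecker_mul, hQ'Q, one_kronecker_one, one_kronecker_one]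

end Kronecker

theorem condE_symmetries_general {m : ℕ}
    (S : Matrix (Fin m × Fin m) (Fin m × Fin m) ℂ) (hS : condE S) :
    (IsUnit S → condE S⁻¹) ∧
    condE (swapMatrix m * S * swapMatrix m)ᵀ ∧
    (∀ Q : Matrix (Fin m) (Fin m) ℂ, IsUnit Q →
      condE ((Q ⊗ₖ Q) * S * (Q ⊗ₖ Q)⁻¹)) := by
  refine ⟨fun hU => condE_nonsing_inv hU hS, condE_swap_transpose hS, fun Q hQ => ?_⟩
  have hQdet : IsUnit Q.det := (isUnit_iff_isUnit_det Q).mp hQ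
  rw [inv_kronecker]
  exact condE_kronecker_conj (mul_nonsing_inv Q hQdet) (nonsing_inv_mul Q hQdet) hS

/-- Symmetries of condition (E): inverse, `(PSP)ᵀ`, and conjugation by
`Q ⊗ Q`. -/
theorem condE_symmetries {m : ℕ} (hm : 1 ≤ m)
    (S : Matrix (Fin m × Fin m) (Fin m × Fin m) ℂ) (hS : condE S) :
    (IsUnit S → condE S⁻¹) ∧
    condE (swapMatrix m * S * swapMatrix m)ᵀ ∧
    (∀ Q : Matrix (Fin m) (Fin m) ℂ, IsUnit Q →
      condE ((Q ⊗ₖ Q) * S * (Q ⊗ₖ Q)⁻¹)) :=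
  condE_symmetries_general S hS
end

section
/- Let m ≥ 1 be an integer, and let ρ_i ∈ ℂ (for 1 ≤ i ≤ m) and μ_{i,j} ∈ ℂ (for 1 ≤ i < j ≤ m) be given. Define the complex matrix S indexed by Fin m × Fin m by S = Σ_{i<j} ρ_i (E_{ii} ⊗ₖ E_{jj}) + μ_{i,j} (E_{ji} ⊗ₖ E_{ij}), where E_{ij} are the matrix units of m×m matrices and ⊗ₖ is the Kronecker product. Then S satisfies condition (E): S₂₃·S₁₂·(S₁₂+S₂₃) = (S₁₂+S₂₃)·S₂₃·S₁₂, where S₁₂ = S ⊗ₖ 1ₘ and S₂₃ = 1ₘ ⊗ₖ S. -/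
open Matrix Kronecker

/-- The matrix `Σ_{i<j} ρ_i E_ii ⊗ E_jj + μ_{i,j} E_ji ⊗ E_ij` of
Proposition 4 (representation of the braid-like algebra `S_n`). -/
noncomputable def repS (m : ℕ) (ρ : Fin m → ℂ) (μ : Fin m → Fin m → ℂ) :
    Matrix (Fin m × Fin m) (Fin m × Fin m) ℂ :=
  ∑ i : Fin m, ∑ j : Fin m,
    if i < j then
      ρ i • (Matrix.single i i (1 : ℂ) ⊗ₖ Matrix.single j j (1 : ℂ)) +
      μ i j • (Matrix.single j i (1 : ℂ) ⊗ₖ Matrix.single i j (1 : ℂ))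
    else 0

/-- The matrix `Σ_{i<j} ζ_j E_ii ⊗ E_jj + ν_{i,j} E_ji ⊗ E_ij` of
Proposition 5 (representation of the braid-like algebra `T_n`). -/
noncomputable def repT (m : ℕ) (ζ : Fin m → ℂ) (ν : Fin m → Fin m → ℂ) :
    Matrix (Fin m × Fin m) (Fin m × Fin m) ℂ :=
  ∑ i : Fin m, ∑ j : Fin m,
    if i < j then
      ζ j • (Matrix.single i i (1 : ℂ) ⊗ₖ Matrix.single j j (1 : ℂ)) +
      ν i j • (Matrix.single j i (1 : ℂ) ⊗ₖ Matrix.single i j (1 : ℂ))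
    else 0

/-!
Each row of `S` has at most one nonzero entry: row `(a, b)` is supported in column
`(min a b, max a b)`, with weight `ρ a` if `a < b`, `μ b a` if `b < a`, and `0` if `a = b`.
Matrices of this shape are closed under products and under `⊗ₖ 1` and `1 ⊗ₖ`, so after
distributing both sides of (E) become sums of two such matrices, and row `(a, b, c)` only
depends on the relative order of `a, b, c`: in each of the thirteen cases both sides send it
to the same columns with the same weights.
-/

namespace Matrix

variable {n α : Type*} [DecidableEq n]

def rowSingle [Zero α] (f : n → n) (w : n → α) : Matrix n n α :=
  of fun p q => if q = f p then w p else 0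

theorem rowSingle_apply [Zero α] (f : n → n) (w : n → α) (p q : n) :
    rowSingle f w p q = if q = f p then w p else 0 :=
  rfl

theorem rowSingle_mul_apply [Fintype n] [NonUnitalNonAssocSemiring α] (f : n → n) (w : n → α)
    (N : Matrix n n α) (p q : n) : (rowSingle f w * N) p q = w p * N (f p) q := by
  simp [mul_apply, rowSingle_apply]

theorem rowSingle_mul_rowSingle [Fintype n] [NonUnitalNonAssocSemiring α] (f g : n → n)
    (w v : n → α) :
    rowSingle f w * rowSingle g v = rowSingle (g ∘ f) (fun p => w p * v (f p)) := by
  ext p q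
  simp [rowSingle_mul_apply, rowSingle_apply]

theorem rowSingle_kronecker_one [MulZeroOneClass α] {l : Type*} [DecidableEq l] (f : n → n)
    (w : n → α) :
    rowSingle f w ⊗ₖ (1 : Matrix l l α) = rowSingle (Prod.map f id) (w ∘ Prod.fst) := by
  ext ⟨p, p'⟩ ⟨q, q'⟩
  by_cases h : p' = q' <;> simp [rowSingle_apply, h, eq_comm]

theorem one_kronecker_rowSingle [MulZeroOneClass α] {l : Type*} [DecidableEq l] (f : n → n)
    (w : n → α) :
    (1 : Matrix l l α) ⊗ₖ rowSingle f w = rowSingle (Prod.map id f) (w ∘ Prod.snd) := by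
  ext ⟨p, p'⟩ ⟨q, q'⟩
  by_cases h : p = q <;> simp [rowSingle_apply, h, eq_comm]

theorem reindex_rowSingle [Zero α] {l : Type*} [DecidableEq l] (e : n ≃ l) (f : n → n)
    (w : n → α) :
    reindex e e (rowSingle f w) = rowSingle (e ∘ f ∘ e.symm) (w ∘ e.symm) := by
  ext p q
  simp [rowSingle_apply, Equiv.symm_apply_eq]

end Matrix

theorem kron12_rowSingle {m : ℕ} (f : Fin m × Fin m → Fin m × Fin m) (w : Fin m × Fin m → ℂ) :
    kron12 (rowSingle f w) =
      rowSingle (fun p => ((f (p.1, p.2.1)).1, (f (p.1, p.2.1)).2, p.2.2))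
        (fun p => w (p.1, p.2.1)) := by
  rw [kron12, rowSingle_kronecker_one, reindex_rowSingle]
  rfl

theorem kron23_rowSingle {m : ℕ} (f : Fin m × Fin m → Fin m × Fin m) (w : Fin m × Fin m → ℂ) :
    kron23 (rowSingle f w) = rowSingle (Prod.map id f) (w ∘ Prod.snd) :=
  one_kronecker_rowSingle f w

def sortPair {α : Type*} [LinearOrder α] (x : α × α) : α × α :=
  (min x.1 x.2, max x.1 x.2)

section repS

variable {m : ℕ} (ρ : Fin m → ℂ) (μ : Fin m → Fin m → ℂ)

def repSWeight (x : Fin m × Fin m) : ℂ :=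
  if x.1 < x.2 then ρ x.1 else if x.2 < x.1 then μ x.2 x.1 else 0

theorem repS_eq_rowSingle : repS m ρ μ = rowSingle sortPair (repSWeight ρ μ) := by
  ext ⟨a, b⟩ ⟨c, d⟩
  simp only [repS, Matrix.sum_apply, ← Finset.sum_filter, Finset.filter_lt_eq_Ioi]
  simp only [Matrix.add_apply, Matrix.smul_apply, kroneckerMap_apply, single_apply, ite_and, mul_ite,
    mul_one, mul_zero, smul_eq_mul, Finset.sum_add_distrib, Finset.sum_ite_eq', Finset.mem_Ioi,
    Finset.sum_ite_irrel, Finset.sum_const_zero, Finset.mem_univ, ↓reduceIte, rowSingle_apply,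
    sortPair, Prod.mk.injEq, repSWeight]
  rw [Fintype.sum_eq_single a (fun x hx => by simp [hx])]
  grind

end repS

theorem repS_satisfies_condE_general (m : ℕ)
    (ρ : Fin m → ℂ) (μ : Fin m → Fin m → ℂ) :
    kron23 (repS m ρ μ) * kron12 (repS m ρ μ) * (kron12 (repS m ρ μ) + kron23 (repS m ρ μ)) =
      (kron12 (repS m ρ μ) + kron23 (repS m ρ μ)) * kron23 (repS m ρ μ) * kron12 (repS m ρ μ) := by
  rw [repS_eq_rowSingle, kron12_rowSingle, kron23_rowSingle]
  simp only [mul_add, add_mul, rowSingle_mul_rowSingle]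
  ext ⟨a, b, c⟩ q
  simp only [Matrix.add_apply, rowSingle_apply, Function.comp, Prod.map, sortPair, repSWeight, id]
  rcases lt_trichotomy a b with hab | hab | hab <;> rcases lt_trichotomy b c with hbc | hbc | hbc <;>
    rcases lt_trichotomy a c with hac | hac | hac <;> subst_vars <;>
    first
    | (exfalso; order)
    | (simp [*, le_of_lt, not_lt_of_gt] <;> split_ifs <;> ring)

/-- Proposition 4: the matrix `S = Σ_{i<j} ρ_i E_ii ⊗ E_jj + μ_{i,j} E_ji ⊗ E_ij`
satisfies condition (E), i.e. yields a representation of the braid-like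
algebra `S_n`. -/
theorem repS_satisfies_condE (m : ℕ) (hm : 1 ≤ m)
    (ρ : Fin m → ℂ) (μ : Fin m → Fin m → ℂ) :
    kron23 (repS m ρ μ) * kron12 (repS m ρ μ) * (kron12 (repS m ρ μ) + kron23 (repS m ρ μ)) =
      (kron12 (repS m ρ μ) + kron23 (repS m ρ μ)) * kron23 (repS m ρ μ) * kron12 (repS m ρ μ) :=
  repS_satisfies_condE_general m ρ μ
end

section
/- Let m ≥ 1 be an integer, and let ζ_j ∈ ℂ (for 1 ≤ j ≤ m) and ν_{i,j} ∈ ℂ (for 1 ≤ i < j ≤ m) be given. Define the complex matrix T indexed by Fin m × Fin m by T = Σ_{i<j} ζ_j (E_{ii} ⊗ₖ E_{jj}) + ν_{i,j} (E_{ji} ⊗ₖ E_{ij}), where E_{ij} are the matrix units of m×m matrices and ⊗ₖ is the Kronecker product. Then T satisfies condition (F): T₁₂·T₂₃·(T₁₂+T₂₃) = (T₁₂+T₂₃)·T₁₂·T₂₃, where T₁₂ = T ⊗ₖ 1ₘ and T₂₃ = 1ₘ ⊗ₖ T. -/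
open Matrix Kronecker

/-!
On the basis vectors, `T (e_a ⊗ e_b) = ζ_b e_a ⊗ e_b + ν_{ab} e_b ⊗ e_a` if `a < b` and
`T (e_a ⊗ e_b) = 0` otherwise. Hence `T₁₂` and `T₂₃` send `e_a ⊗ e_b ⊗ e_c` to combinations of
basis vectors with permuted indices, and both sides of (F) can be evaluated on `e_a ⊗ e_b ⊗ e_c`
explicitly once the relative order of `a`, `b`, `c` is fixed.
-/

section

variable {m : ℕ} (ζ : Fin m → ℂ) (ν : Fin m → Fin m → ℂ)

lemma repT_mulVec_single (a b : Fin m) :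
    repT m ζ ν *ᵥ Pi.single (a, b) 1 =
      if a < b then ζ b • Pi.single (a, b) 1 + ν a b • Pi.single (b, a) 1 else 0 := by
  ext ⟨x, y⟩
  simp only [mulVec_single_one, col_apply, repT, single_kronecker_single, mul_one, Matrix.sum_apply]
  rw [Finset.sum_eq_single a, Finset.sum_eq_single b]
  · split_ifs <;> simp [Pi.single_apply, single_apply, eq_comm]
  · intro j _ hj
    split_ifs <;> simp [hj]
  · simp
  · intro i _ hi
    refine Finset.sum_eq_zero fun j _ => ?_
    split_ifs <;> simp [hi]
  · simp

lemma kron12_repT_mulVec_single (a b c : Fin m) :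
    kron12 (repT m ζ ν) *ᵥ Pi.single (a, b, c) 1 =
      if a < b then ζ b • Pi.single (a, b, c) 1 + ν a b • Pi.single (b, a, c) 1 else 0 := by
  ext ⟨x, y, z⟩
  have h := congrFun (repT_mulVec_single ζ ν a b) (x, y)
  rw [mulVec_single_one, col_apply] at h ⊢
  simp only [kron12, reindex_apply, submatrix_apply, kroneckerMap_apply,
    Equiv.prodAssoc_symm_apply, h, one_apply]
  split_ifs <;> simp_all [Pi.single_apply]

lemma kron23_repT_mulVec_single (a b c : Fin m) :
    kron23 (repT m ζ ν) *ᵥ Pi.single (a, b, c) 1 =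
      if b < c then ζ c • Pi.single (a, b, c) 1 + ν b c • Pi.single (a, c, b) 1 else 0 := by
  ext ⟨x, y, z⟩
  have h := congrFun (repT_mulVec_single ζ ν b c) (y, z)
  rw [mulVec_single_one, col_apply] at h ⊢
  simp only [kron23, kroneckerMap_apply, h, one_apply]
  split_ifs <;> simp_all [Pi.single_apply]

end

theorem repT_satisfies_condF_general (m : ℕ)
    (ζ : Fin m → ℂ) (ν : Fin m → Fin m → ℂ) :
    kron12 (repT m ζ ν) * kron23 (repT m ζ ν) * (kron12 (repT m ζ ν) + kron23 (repT m ζ ν)) =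
      (kron12 (repT m ζ ν) + kron23 (repT m ζ ν)) * kron12 (repT m ζ ν) * kron23 (repT m ζ ν) := by
  refine ext_of_mulVec_single ?_
  rintro ⟨a, b, c⟩
  simp only [← mulVec_mulVec, add_mulVec, mulVec_add]
  obtain hab | hab | hab := lt_trichotomy a b <;>
    obtain hbc | hbc | hbc := lt_trichotomy b c <;>
    obtain hac | hac | hac := lt_trichotomy a c <;>
    first
    | order
    | subst_vars
      simp only [kron12_repT_mulVec_single, kron23_repT_mulVec_single, mulVec_add, mulVec_smul,
        mulVec_zero, smul_zero, add_zero, zero_add, lt_self_iff_false, lt_asymm, *, if_true,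
        if_false] <;>
      module

/-- Proposition 5: the matrix `T = Σ_{i<j} ζ_j E_ii ⊗ E_jj + ν_{i,j} E_ji ⊗ E_ij`
satisfies condition (F), i.e. yields a representation of the braid-like
algebra `T_n`. -/
theorem repT_satisfies_condF (m : ℕ) (hm : 1 ≤ m)
    (ζ : Fin m → ℂ) (ν : Fin m → Fin m → ℂ) :
    kron12 (repT m ζ ν) * kron23 (repT m ζ ν) * (kron12 (repT m ζ ν) + kron23 (repT m ζ ν)) =
      (kron12 (repT m ζ ν) + kron23 (repT m ζ ν)) * kron12 (repT m ζ ν) * kron23 (repT m ζ ν) :=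
  repT_satisfies_condF_general m ζ ν
end

section
/- Let m ≥ 1 be an integer, ρ_i, ζ_j ∈ ℂ and μ_{i,j}, ν_{i,j} ∈ ℂ for 1 ≤ i < j ≤ m. Set S = Σ_{i<j} ρ_i (E_{ii} ⊗ₖ E_{jj}) + μ_{i,j} (E_{ji} ⊗ₖ E_{ij}) and T = Σ_{i<j} ζ_j (E_{ii} ⊗ₖ E_{jj}) + ν_{i,j} (E_{ji} ⊗ₖ E_{ij}), both complex matrices indexed by Fin m × Fin m. Then ρ_i ν_{i,j} = μ_{i,j} ζ_j for all 1 ≤ i < j ≤ m if and only if T·S = S·T. -/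
open Matrix Kronecker

/-! Both `S` and `T` send `e_i ⊗ e_j` (`i < j`) to `a e_i ⊗ e_j + b e_j ⊗ e_i` and kill
`e_i ⊗ e_j` for `i ≥ j`. Such matrices are closed under multiplication: in a product the left
factor kills the `e_j ⊗ e_i` component produced by the right one, so the coefficient pairs
compose as `(a, b) · (a', b') = (a a', b a')`. Hence `TS` and `ST` have coefficients
`(ζ_j ρ_i, ν_ij ρ_i)` and `(ρ_i ζ_j, μ_ij ζ_j)`, which agree exactly when
`ρ_i ν_ij = μ_ij ζ_j`. -/

namespace Matrix

variable {ι R : Type*} [Fintype ι] [LinearOrder ι] [Semiring R]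

noncomputable def pairMatrix (f g : ι → ι → R) : Matrix (ι × ι) (ι × ι) R :=
  ∑ i : ι, ∑ j : ι,
    if i < j then
      f i j • (single i i (1 : R) ⊗ₖ single j j (1 : R)) +
      g i j • (single j i (1 : R) ⊗ₖ single i j (1 : R))
    else 0

lemma pairMatrix_apply (f g : ι → ι → R) (x y : ι × ι) :
    pairMatrix f g x y =
      if y.1 < y.2 then
        (if x = y then f y.1 y.2 else 0) + (if x = y.swap then g y.1 y.2 else 0)
      else 0 := by
  simp only [pairMatrix, single_kronecker_single, mul_one]
  rw [← Fintype.sum_prod_type', sum_apply, Finset.sum_eq_single y]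
  · by_cases hy : y.1 < y.2 <;> simp [hy, single_apply, eq_comm, Prod.swap]
  · rintro ⟨i, j⟩ - hij
    split_ifs <;> simp [single_apply_of_col_ne _ _ hij]
  · simp

lemma pairMatrix_mul (f g f' g' : ι → ι → R) :
    pairMatrix f g * pairMatrix f' g' = pairMatrix (f * f') (g * f') := by
  ext x y
  by_cases hy : y.1 < y.2
  · have hswap : pairMatrix f g x y.swap = 0 := by
      rw [pairMatrix_apply]; exact if_neg (not_lt_of_gt hy)
    calc (pairMatrix f g * pairMatrix f' g') x y
        = pairMatrix f g x y * f' y.1 y.2 + pairMatrix f g x y.swap * g' y.1 y.2 := by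
          simp only [mul_apply, pairMatrix_apply _ _ _ y, if_pos hy, mul_add, mul_ite, mul_zero,
            Finset.sum_add_distrib, Finset.sum_ite_eq', Finset.mem_univ, if_true]
      _ = pairMatrix (f * f') (g * f') x y := by
          rw [hswap, zero_mul, add_zero]
          simp only [pairMatrix_apply, if_pos hy, add_mul, ite_mul, zero_mul, Pi.mul_apply]
  · simp [mul_apply, pairMatrix_apply, hy]

lemma pairMatrix_eq_iff (f g f' g' : ι → ι → R) :
    pairMatrix f g = pairMatrix f' g' ↔ ∀ i j, i < j → f i j = f' i j ∧ g i j = g' i j := by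
  constructor
  · intro h i j hij
    exact ⟨by simpa [pairMatrix_apply, hij, hij.ne] using congr_fun₂ h (i, j) (i, j),
      by simpa [pairMatrix_apply, hij, hij.ne'] using congr_fun₂ h (j, i) (i, j)⟩
  · intro h
    ext x y
    simp only [pairMatrix_apply]
    split_ifs <;> simp_all

end Matrix

theorem compat_iff_commute_general (m : ℕ)
    (ρ ζ : Fin m → ℂ) (μ ν : Fin m → Fin m → ℂ) :
    (∀ i j : Fin m, i < j → ρ i * ν i j = μ i j * ζ j) ↔
      repT m ζ ν * repS m ρ μ = repS m ρ μ * repT m ζ ν := by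
  change _ ↔ pairMatrix _ ν * pairMatrix _ μ = pairMatrix _ μ * pairMatrix _ ν
  rw [pairMatrix_mul, pairMatrix_mul, pairMatrix_eq_iff]
  simp [mul_comm]

/-- The compatibility conditions `ρ_i ν_{i,j} = μ_{i,j} ζ_j` (for `i < j`) of
the product-R-matrix theorem hold if and only if `TS = ST`. -/
theorem compat_iff_commute (m : ℕ) (hm : 1 ≤ m)
    (ρ ζ : Fin m → ℂ) (μ ν : Fin m → Fin m → ℂ) :
    (∀ i j : Fin m, i < j → ρ i * ν i j = μ i j * ζ j) ↔
      repT m ζ ν * repS m ρ μ = repS m ρ μ * repT m ζ ν :=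
  compat_iff_commute_general m ρ ζ μ ν
end

section
/- Let A be a unital associative ℂ-algebra and let a, b ∈ A satisfy a·b·(a+b) = (a+b)·a·b. Let x, y, z ∈ ℂ be such that 1−ya, 1−za, 1−yb and 1−zb are units of A. Define Ř^a(u,v) = (1−ua)·(1−va)⁻¹ and Ř^b(u,v) = (1−ub)·(1−vb)⁻¹. Then the braided Yang–Baxter equation holds: Ř^a(x,y)·Ř^b(x,z)·Ř^a(y,z) = Ř^b(y,z)·Ř^a(x,z)·Ř^b(x,y). Moreover Ř^a(x,y)·Ř^a(y,x) = 1 whenever 1−xa and 1−ya are units, and Ř^a(x,x) = 1. -/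
section BaxterisationAux

variable {M : Type*} [Monoid M]

private lemma comm_inv_right' {u x iu : M} (h1 : u * iu = 1) (h2 : iu * u = 1)
    (h : x * u = u * x) : x * iu = iu * x := by
  calc x * iu = iu * (u * (x * iu)) := by rw [← mul_assoc, h2, one_mul]
    _ = iu * (x * (u * iu)) := by rw [← mul_assoc u, ← h, mul_assoc]
    _ = iu * x := by rw [h1, mul_one]

private lemma abstract_YBE' (ax ay az bx byy bz iay iaz iby ibz : M)
    (hay1 : ay * iay = 1) (hay2 : iay * ay = 1)
    (haz1 : az * iaz = 1) (haz2 : iaz * az = 1)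
    (hby1 : byy * iby = 1)
    (hbz1 : bz * ibz = 1) (hbz2 : ibz * bz = 1)
    (caxy : ax * ay = ay * ax)
    (caxz : ax * az = az * ax)
    (cayz : ay * az = az * ay)
    (cbxz : bx * bz = bz * bx)
    (dxy : (ax*bx) * (ay*byy) = (ay*byy) * (ax*bx))
    (dxz : (ax*bx) * (az*bz) = (az*bz) * (ax*bx))
    (dyz : (ay*byy) * (az*bz) = (az*bz) * (ay*byy)) :
    ax * iay * (bx * ibz) * (ay * iaz) = byy * ibz * (ax * iaz) * (bx * iby) := by
  have hz1 : (az*bz) * (ibz*iaz) = 1 := by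
    rw [mul_assoc, ← mul_assoc bz, hbz1, one_mul, haz1]
  have hz2 : (ibz*iaz) * (az*bz) = 1 := by
    rw [mul_assoc, ← mul_assoc iaz, haz2, one_mul, hbz2]
  have c1 : ax * iay = iay * ax := comm_inv_right' hay1 hay2 caxy
  have c2 : ay * iaz = iaz * ay := comm_inv_right' haz1 haz2 cayz
  have c3 : ax * iaz = iaz * ax := comm_inv_right' haz1 haz2 caxz
  have c4 : bx * ibz = ibz * bx := comm_inv_right' hbz1 hbz2 cbxz
  have hKd : (ax*bx) * (ibz*iaz) = (ibz*iaz) * (ax*bx) := comm_inv_right' hz1 hz2 dxz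
  have hyd : (ay*byy) * (ibz*iaz) = (ibz*iaz) * (ay*byy) := comm_inv_right' hz1 hz2 dyz
  have hKy : (ax*bx) * (ibz*iaz) * (ay*byy) = (ay*byy) * ((ax*bx) * (ibz*iaz)) := by
    rw [mul_assoc, ← hyd, ← mul_assoc, dxy, mul_assoc]
  have lhs_eq : ax * iay * (bx * ibz) * (ay * iaz)
      = iay * ((ax*bx) * (ibz*iaz) * ay) := by
    rw [c1, c2]
    simp only [mul_assoc]
  have rhs_eq : byy * ibz * (ax * iaz) * (bx * iby)
      = byy * ((ax*bx) * (ibz*iaz) * iby) := by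
    have h : ibz*(iaz*(ax*(bx*iby))) = ax*(bx*(ibz*(iaz*iby))) := by
      calc ibz*(iaz*(ax*(bx*iby))) = (ibz*iaz*(ax*bx))*iby := by simp only [mul_assoc]
        _ = (ax*bx*(ibz*iaz))*iby := by rw [← hKd]
        _ = ax*(bx*(ibz*(iaz*iby))) := by simp only [mul_assoc]
    rw [c3]
    simp only [mul_assoc]
    rw [h]
  rw [lhs_eq, rhs_eq]
  have key : (ax*bx) * (ibz*iaz) * ay = ay * (byy * ((ax*bx) * (ibz*iaz) * iby)) := by
    calc (ax*bx) * (ibz*iaz) * ay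
        = (ax*bx) * (ibz*iaz) * (ay * (byy * iby)) := by rw [hby1, mul_one]
      _ = (ax*bx) * (ibz*iaz) * (ay*byy) * iby := by simp only [mul_assoc]
      _ = (ay*byy) * ((ax*bx) * (ibz*iaz)) * iby := by rw [hKy]
      _ = ay * (byy * ((ax*bx) * (ibz*iaz) * iby)) := by simp only [mul_assoc]
  rw [key, ← mul_assoc, hay2, one_mul]

private lemma expand_AB {A : Type*} [Ring A] [Algebra ℂ A] (a b : A) (u : ℂ) :
    (1 - u • a) * (1 - u • b) = 1 - u • (a+b) + (u*u) • (a*b) := by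
  rw [mul_sub, sub_mul, sub_mul, smul_mul_smul_comm]
  simp only [mul_one, one_mul]
  module

private lemma comm_sc {A : Type*} [Ring A] [Algebra ℂ A] (s c : A) (h : c * s = s * c)
    (p q r w : ℂ) :
    (1 - p•s + q•c) * (1 - r•s + w•c) = (1 - r•s + w•c) * (1 - p•s + q•c) := by
  simp only [mul_sub, sub_mul, mul_add, add_mul, one_mul, mul_one, smul_mul_smul_comm]
  rw [h]
  module

private lemma comm_AA {A : Type*} [Ring A] [Algebra ℂ A] (a : A) (u v : ℂ) :
    (1 - u • a) * (1 - v • a) = (1 - v • a) * (1 - u • a) := by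
  simp only [mul_sub, sub_mul, one_mul, mul_one, smul_mul_smul_comm]
  module

end BaxterisationAux

/-- **Baxterisation for the braid-like algebra `T_n`.**
If `a, b` satisfy the defining relation `ab(a+b) = (a+b)ab` of neighbouring
generators of `T_n`, then the Baxterised matrices
`Ř^c(u,v) = (1 - u•c)(1 - v•c)⁻¹` satisfy the braided Yang–Baxter equation,
and are unitary and regular. -/
theorem baxterisation_Tn_braided_YBE (A : Type*) [Ring A] [Algebra ℂ A]
    (a b : A) (hrel : a * b * (a + b) = (a + b) * a * b)
    (x y z : ℂ)
    (hya : IsUnit (1 - y • a)) (hza : IsUnit (1 - z • a))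
    (hyb : IsUnit (1 - y • b)) (hzb : IsUnit (1 - z • b)) :
    (fun u v : ℂ => (1 - u • a) * Ring.inverse (1 - v • a)) x y *
      (fun u v : ℂ => (1 - u • b) * Ring.inverse (1 - v • b)) x z *
      (fun u v : ℂ => (1 - u • a) * Ring.inverse (1 - v • a)) y z =
    (fun u v : ℂ => (1 - u • b) * Ring.inverse (1 - v • b)) y z *
      (fun u v : ℂ => (1 - u • a) * Ring.inverse (1 - v • a)) x z *
      (fun u v : ℂ => (1 - u • b) * Ring.inverse (1 - v • b)) x y ∧
    (IsUnit (1 - x • a) →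
      (1 - x • a) * Ring.inverse (1 - y • a) * ((1 - y • a) * Ring.inverse (1 - x • a)) = 1) ∧
    (IsUnit (1 - x • a) →
      (1 - x • a) * Ring.inverse (1 - x • a) = 1) := by
  have hcs : (a*b) * (a+b) = (a+b) * (a*b) := by
    rw [← mul_assoc]; exact hrel
  refine ⟨?_, ?_, ?_⟩
  · show (1 - x • a) * Ring.inverse (1 - y • a) *
        ((1 - x • b) * Ring.inverse (1 - z • b)) *
        ((1 - y • a) * Ring.inverse (1 - z • a)) =
      (1 - y • b) * Ring.inverse (1 - z • b) *
        ((1 - x • a) * Ring.inverse (1 - z • a)) *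
        ((1 - x • b) * Ring.inverse (1 - y • b))
    refine abstract_YBE' _ _ _ _ _ _ _ _ _ _
      (Ring.mul_inverse_cancel _ hya) (Ring.inverse_mul_cancel _ hya)
      (Ring.mul_inverse_cancel _ hza) (Ring.inverse_mul_cancel _ hza)
      (Ring.mul_inverse_cancel _ hyb)
      (Ring.mul_inverse_cancel _ hzb) (Ring.inverse_mul_cancel _ hzb)
      (comm_AA a x y) (comm_AA a x z) (comm_AA a y z) (comm_AA b x z)
      ?_ ?_ ?_
    all_goals
      rw [expand_AB, expand_AB]
      exact comm_sc _ _ hcs _ _ _ _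
  · intro hxa
    rw [mul_assoc, ← mul_assoc (Ring.inverse (1 - y • a)),
      Ring.inverse_mul_cancel _ hya, one_mul, Ring.mul_inverse_cancel _ hxa]
  · intro hxa
    exact Ring.mul_inverse_cancel _ hxa
end
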